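/- arXiv:2509.13960 — 4 statements merged into one kernel-verified Lean document; each statement's English description precedes it below -/
import Mathlib

section
/- Let g be proper, lsc, and ρ-weakly convex. Then for each x ∈ ℝ^d, the map γ ↦ g(Prox_{γg}(x)) is non-increasing on (0, 1/ρ). -/
open scoped RealInnerProductSpace
open Set

theorem g_prox_antitone {d : ℕ} (g : EuclideanSpace ℝ (Fin d) → ℝ) (ρ : ℝ)
    (hlsc : LowerSemicontinuous g)
    (hconv : ConvexOn ℝ Set.univ (fun z => g z + ρ / 2 * ‖z‖ ^ 2))
    (x : EuclideanSpace ℝ (Fin d))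
    (prox : ℝ → EuclideanSpace ℝ (Fin d))
    (hprox : ∀ γ : ℝ, 0 < γ → γ * ρ < 1 →
      IsMinOn (fun y => (1 / (2 * γ)) * ‖x - y‖ ^ 2 + g y) Set.univ (prox γ)) :
    AntitoneOn (fun γ => g (prox γ)) {γ : ℝ | 0 < γ ∧ γ * ρ < 1} := by
  intro a ha b hb hab
  rcases eq_or_lt_of_le hab with rfl | hlt
  · exact le_refl _
  obtain ⟨ha0, _⟩ := ha
  obtain ⟨hb0, hbρ⟩ := hb
  have h1 := (hprox a ha0 (by nlinarith)) (mem_univ (prox b))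
  have h2 := (hprox b hb0 hbρ) (mem_univ (prox a))
  simp only [Set.mem_setOf_eq] at h1 h2
  set A := ‖x - prox a‖ ^ 2 with hA
  set B := ‖x - prox b‖ ^ 2 with hB
  have hβ : (0:ℝ) < 1 / (2 * b) := by positivity
  have hαβ : 1 / (2 * b) < 1 / (2 * a) := by
    apply one_div_lt_one_div_of_lt <;> linarith
  have key : A ≤ B := by nlinarith [h1, h2]
  simp only
  nlinarith [h2, mul_nonneg hβ.le (sub_nonneg.2 key)]
end

section
/- Let g be proper, lsc, and ρ-weakly convex. Then for each x ∈ ℝ^d, the function γ ↦ g^γ(x) is differentiable on (0, 1/ρ) with derivative ∂g^γ/∂γ (x) = -(1/(2γ²))‖x - Prox_{γg}(x)‖². -/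
/-!
Put `c = 1 / (2γ)` and `e(c) = inf_y c‖x - y‖² + g y`, an infimum of functions affine in `c`.
Comparing the objectives at the minimizers `p_c` and `p_μ` sandwiches
`e(μ) - e(c)` between `(μ - c)‖x - p_μ‖²` and `(μ - c)‖x - p_c‖²`, so `e'(c) = ‖x - p_c‖²`
as soon as `μ ↦ p_μ` is continuous at `c`. Continuity comes from the quadratic growth of the
`(2c - ρ)`-strongly convex objective around `p_c`. The chain rule for `γ ↦ 1 / (2γ)` concludes.
-/

open scoped RealInnerProductSpace
open Set Filter Topology Asymptotics

lemma IsMinOn.iInf_eq_of_univ {α β : Type*} [ConditionallyCompleteLinearOrder β]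
    {f : α → β} {a : α} (h : IsMinOn f univ a) : ⨅ y, f y = f a :=
  have : Nonempty α := ⟨a⟩
  ciInf_eq_of_forall_ge_of_forall_gt_exists_lt (isMinOn_univ_iff.mp h) fun _ hw => ⟨a, hw⟩

lemma hasDerivAt_iInf_mul_add_of_isMinOn {α : Type*} (φ ψ : α → ℝ) {p : ℝ → α} {c : ℝ}
    (hmin : ∀ᶠ μ in 𝓝 c, IsMinOn (fun y => μ * φ y + ψ y) univ (p μ))
    (hcont : ContinuousAt (φ ∘ p) c) :
    HasDerivAt (fun μ => ⨅ y, μ * φ y + ψ y) (φ (p c)) c := by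
  have hc : ⨅ y, c * φ y + ψ y = c * φ (p c) + ψ (p c) := hmin.self_of_nhds.iInf_eq_of_univ
  have hsandwich : ∀ᶠ μ in 𝓝 c,
      ‖(⨅ y, μ * φ y + ψ y) - (⨅ y, c * φ y + ψ y) - (μ - c) • φ (p c)‖ ≤
        ‖(μ - c) * (φ (p μ) - φ (p c))‖ := by
    filter_upwards [hmin] with μ hμ
    have upper := isMinOn_univ_iff.mp hμ (p c)
    have lower := isMinOn_univ_iff.mp hmin.self_of_nhds (p μ)
    rw [hμ.iInf_eq_of_univ, hc, smul_eq_mul, Real.norm_eq_abs, Real.norm_eq_abs, abs_le]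
    constructor <;> cases abs_cases ((μ - c) * (φ (p μ) - φ (p c))) <;> nlinarith
  have hsmall : (fun μ => φ (p μ) - φ (p c)) =o[𝓝 c] fun _ => (1 : ℝ) :=
    (isLittleO_one_iff ℝ).mpr (tendsto_sub_nhds_zero_iff.mpr hcont)
  rw [hasDerivAt_iff_isLittleO]
  simpa using (IsBigO.of_bound' hsandwich).trans_isLittleO
    ((isBigO_refl (fun μ => μ - c) _).mul_isLittleO hsmall)

lemma StrongConvexOn.add_sq_norm_sub_le_of_isMinOn {E : Type*} [NormedAddCommGroup E]
    [NormedSpace ℝ E] {s : Set E} {m : ℝ} {f : E → ℝ} {a y : E}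
    (hf : StrongConvexOn s m f) (ha : a ∈ s) (hmin : IsMinOn f s a) (hy : y ∈ s) :
    f a + m / 4 * ‖y - a‖ ^ 2 ≤ f y := by
  have hmid : f a ≤ f ((1 / 2 : ℝ) • y + (1 / 2 : ℝ) • a) :=
    hmin (hf.1 hy ha (by norm_num) (by norm_num) (by norm_num))
  have hconv := hf.2 hy ha (show (0 : ℝ) ≤ 1 / 2 by norm_num) (show (0 : ℝ) ≤ 1 / 2 by norm_num)
    (by norm_num)
  simp only [smul_eq_mul] at hconv
  linarith

section InnerProductSpace

variable {E : Type*} [NormedAddCommGroup E] [InnerProductSpace ℝ E]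

lemma strongConvexOn_mul_sq_norm_sub_add {g : E → ℝ} {ρ : ℝ}
    (hg : ConvexOn ℝ univ fun z => g z + ρ / 2 * ‖z‖ ^ 2) (x : E) (μ : ℝ) :
    StrongConvexOn univ (2 * μ - ρ) fun y => μ * ‖x - y‖ ^ 2 + g y := by
  rw [strongConvexOn_iff_convex]
  have haffine : ConvexOn ℝ univ fun y => -(2 * μ) * ⟪x, y⟫ + μ * ‖x‖ ^ 2 :=
    ((-(2 * μ) • innerₛₗ ℝ x).convexOn convex_univ).add_const _
  have hsplit : (fun y => μ * ‖x - y‖ ^ 2 + g y - (2 * μ - ρ) / 2 * ‖y‖ ^ 2) =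
      fun y => (g y + ρ / 2 * ‖y‖ ^ 2) + (-(2 * μ) * ⟪x, y⟫ + μ * ‖x‖ ^ 2) := by
    funext y
    rw [norm_sub_sq_real]
    ring
  rw [hsplit]
  exact hg.add haffine

variable (x : E) (ψ : E → ℝ)

lemma mul_norm_sub_le_of_growth_of_isMinOn {a b : E} {c μ α : ℝ}
    (hgrowth : ∀ y, c * ‖x - a‖ ^ 2 + ψ a + α * ‖y - a‖ ^ 2 ≤ c * ‖x - y‖ ^ 2 + ψ y)
    (hmin : IsMinOn (fun y => μ * ‖x - y‖ ^ 2 + ψ y) univ b) :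
    (α - |μ - c|) * ‖b - a‖ ≤ 2 * |μ - c| * ‖x - a‖ := by
  have hgrowth_b := hgrowth b
  have hmin_a := isMinOn_univ_iff.mp hmin a
  have hexpand : ‖x - b‖ ^ 2 = ‖x - a‖ ^ 2 - 2 * ⟪x - a, b - a⟫ + ‖b - a‖ ^ 2 := by
    rw [← norm_sub_sq_real, sub_sub_sub_cancel_right]
  have hinner : |(μ - c) * ⟪x - a, b - a⟫| ≤ |μ - c| * (‖x - a‖ * ‖b - a‖) := by
    rw [abs_mul]
    exact mul_le_mul_of_nonneg_left (abs_real_inner_le_norm _ _) (abs_nonneg _)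
  have hquad : (α - |μ - c|) * ‖b - a‖ ^ 2 ≤ 2 * |μ - c| * ‖x - a‖ * ‖b - a‖ := by
    rw [hexpand] at hgrowth_b hmin_a
    cases abs_cases (μ - c) <;> cases abs_cases ((μ - c) * ⟪x - a, b - a⟫) <;>
      nlinarith [sq_nonneg ‖b - a‖]
  rcases (norm_nonneg (b - a)).eq_or_lt with hzero | hpos
  · rw [← hzero, mul_zero]
    positivity
  · nlinarith

lemma continuousAt_of_growth_of_isMinOn {p : ℝ → E} {c α : ℝ} (hα : 0 < α)
    (hgrowth : ∀ y, c * ‖x - p c‖ ^ 2 + ψ (p c) + α * ‖y - p c‖ ^ 2 ≤ c * ‖x - y‖ ^ 2 + ψ y)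
    (hmin : ∀ᶠ μ in 𝓝 c, IsMinOn (fun y => μ * ‖x - y‖ ^ 2 + ψ y) univ (p μ)) :
    ContinuousAt p c := by
  rw [ContinuousAt, ← tendsto_sub_nhds_zero_iff]
  have hnear : ∀ᶠ μ in 𝓝 c, |μ - c| < α / 2 := by
    filter_upwards [Metric.ball_mem_nhds c (half_pos hα)] with μ hμ
    rwa [Metric.mem_ball, Real.dist_eq] at hμ
  have hlipschitz : ∀ᶠ μ in 𝓝 c, ‖p μ - p c‖ ≤ 4 / α * ‖x - p c‖ * |μ - c| := by
    filter_upwards [hmin, hnear] with μ hμ hμc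
    have h := mul_norm_sub_le_of_growth_of_isMinOn x ψ hgrowth hμ
    rw [show 4 / α * ‖x - p c‖ * |μ - c| = 2 * |μ - c| * ‖x - p c‖ / (α / 2) by
      field_simp; ring, le_div_iff₀ (half_pos hα)]
    nlinarith [norm_nonneg (p μ - p c)]
  refine squeeze_zero_norm' hlipschitz ?_
  simpa using ((continuous_sub_right c).abs.const_mul (4 / α * ‖x - p c‖)).tendsto c

end InnerProductSpace

theorem moreau_envelope_deriv_in_gamma_general {d : ℕ}
    (g : EuclideanSpace ℝ (Fin d) → ℝ) (ρ : ℝ)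
    (hconv : ConvexOn ℝ Set.univ (fun z => g z + ρ / 2 * ‖z‖ ^ 2))
    (x : EuclideanSpace ℝ (Fin d))
    (prox : ℝ → EuclideanSpace ℝ (Fin d))
    (hprox : ∀ γ : ℝ, 0 < γ → γ * ρ < 1 →
      IsMinOn (fun y => (1 / (2 * γ)) * ‖x - y‖ ^ 2 + g y) Set.univ (prox γ)) :
    ∀ γ : ℝ, 0 < γ → γ * ρ < 1 →
      HasDerivAt (fun t => ⨅ y, (1 / (2 * t)) * ‖x - y‖ ^ 2 + g y)
        (-(1 / (2 * γ ^ 2)) * ‖x - prox γ‖ ^ 2) γ := by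
  intro γ hγ hγρ
  have hrecip_recip : ∀ t : ℝ, t ≠ 0 → 1 / (2 * (1 / (2 * t))) = t := fun t ht => by field_simp
  have hc : 0 < 1 / (2 * γ) := by positivity
  have hρc : ρ < 2 * (1 / (2 * γ)) := by
    rw [show 2 * (1 / (2 * γ)) = 1 / γ by field_simp, lt_div_iff₀ hγ]
    linarith
  have hmin : ∀ᶠ μ in 𝓝 (1 / (2 * γ)),
      IsMinOn (fun y => μ * ‖x - y‖ ^ 2 + g y) univ (prox (1 / (2 * μ))) := by
    filter_upwards [eventually_gt_nhds hc,
      eventually_gt_nhds (show ρ / 2 < 1 / (2 * γ) by linarith)] with μ hμ hρμ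
    have h := hprox (1 / (2 * μ)) (by positivity) (by
      rw [div_mul_eq_mul_div, one_mul, div_lt_one (by positivity)]; linarith)
    rwa [hrecip_recip μ hμ.ne'] at h
  have hgrowth := fun y => (strongConvexOn_mul_sq_norm_sub_add hconv x (1 / (2 * γ))
    ).add_sq_norm_sub_le_of_isMinOn (mem_univ _) hmin.self_of_nhds (mem_univ y)
  have hprox_cont : ContinuousAt (fun μ => prox (1 / (2 * μ))) (1 / (2 * γ)) :=
    continuousAt_of_growth_of_isMinOn x g (by linarith) hgrowth hmin
  have henvelope := hasDerivAt_iInf_mul_add_of_isMinOn (fun y => ‖x - y‖ ^ 2) g hmin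
    (((continuous_const.sub continuous_id).norm.pow 2).continuousAt.comp hprox_cont)
  have hreparam : HasDerivAt (fun t => 1 / (2 * t)) (-(1 / (2 * γ ^ 2))) γ := by
    rw [show (fun t : ℝ => 1 / (2 * t)) = fun t => (2 * t)⁻¹ from funext fun t => one_div _]
    exact (((hasDerivAt_id' γ).const_mul 2).inv (by positivity)).congr_deriv (by field_simp)
  refine (henvelope.comp γ hreparam).congr_deriv ?_
  rw [hrecip_recip γ hγ.ne']
  ring

theorem moreau_envelope_deriv_in_gamma {d : ℕ}
    (g : EuclideanSpace ℝ (Fin d) → ℝ) (ρ : ℝ)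
    (hlsc : LowerSemicontinuous g)
    (hconv : ConvexOn ℝ Set.univ (fun z => g z + ρ / 2 * ‖z‖ ^ 2))
    (x : EuclideanSpace ℝ (Fin d))
    (prox : ℝ → EuclideanSpace ℝ (Fin d))
    (hprox : ∀ γ : ℝ, 0 < γ → γ * ρ < 1 →
      IsMinOn (fun y => (1 / (2 * γ)) * ‖x - y‖ ^ 2 + g y) Set.univ (prox γ)) :
    ∀ γ : ℝ, 0 < γ → γ * ρ < 1 →
      HasDerivAt (fun t => ⨅ y, (1 / (2 * t)) * ‖x - y‖ ^ 2 + g y)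
        (-(1 / (2 * γ ^ 2)) * ‖x - prox γ‖ ^ 2) γ :=
  moreau_envelope_deriv_in_gamma_general g ρ hconv x prox hprox
end

section
/- Let g be proper, lsc, ρ-weakly convex with γρ < 1, and set g_ρ = g + (ρ/2)‖·‖². Then for all x, g^γ(x) = g_ρ^{γ/(1-γρ)}(x/(1-γρ)) - (ρ/(2(1-γρ)))‖x‖², and Prox_{γg}(x) = Prox_{(γ/(1-γρ)) g_ρ}(x/(1-γρ)). -/
open scoped RealInnerProductSpace
open Set

/-!
Completing the square: since `g_ρ = g + (ρ/2)‖·‖²`, the objective of `Prox_{γ' g_ρ}` at `x/(1-γρ)`,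
with `γ' = γ/(1-γρ)`, differs from the objective of `Prox_{γ g}` at `x` by the constant
`ρ‖x‖²/(2(1-γρ))`. Hence the two objectives have the same minimisers and their infima differ by that
constant; the infimum is a genuine one (not the junk value `0`) because a convex function grows at
most linearly downwards, so adding a positive multiple of `‖x - ·‖²` makes it bounded below.
-/

lemma ConvexOn.exists_sub_mul_norm_le {E : Type*} [NormedAddCommGroup E] [NormedSpace ℝ E]
    {G : E → ℝ} (hG : ConvexOn ℝ univ G) {x : E} {b : ℝ}
    (hb : ∀ z ∈ Metric.closedBall x 1, b ≤ G z) :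
    ∃ K, ∀ y, b - K * ‖y - x‖ ≤ G y := by
  have hbx : b ≤ G x := hb x (Metric.mem_closedBall_self zero_le_one)
  refine ⟨G x - b, fun y => ?_⟩
  set r := ‖y - x‖ with hr
  rcases le_or_gt r 1 with hr1 | hr1
  · have := hb y (by rwa [Metric.mem_closedBall, dist_eq_norm])
    nlinarith [norm_nonneg (y - x)]
  · have hr0 : 0 < r := one_pos.trans hr1
    -- `z` is the point of the unit sphere around `x` on the segment `[x, y]`.
    set z := (1 - r⁻¹) • x + r⁻¹ • y
    have hz : z ∈ Metric.closedBall x 1 := by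
      have : z - x = r⁻¹ • (y - x) := by simp only [z]; module
      rw [Metric.mem_closedBall, dist_eq_norm, this, norm_smul, Real.norm_of_nonneg (by positivity),
        ← hr, inv_mul_cancel₀ hr0.ne']
    have hconv : G z ≤ (1 - r⁻¹) * G x + r⁻¹ * G y :=
      hG.2 (mem_univ x) (mem_univ y) (by rw [sub_nonneg]; exact inv_le_one_of_one_le₀ hr1.le)
        (by positivity) (by ring)
    have hscaled : r * b ≤ (r - 1) * G x + G y := by
      calc r * b ≤ r * ((1 - r⁻¹) * G x + r⁻¹ * G y) := by
            gcongr; exact (hb z hz).trans hconv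
        _ = (r - 1) * G x + G y := by field_simp
    nlinarith

lemma bddBelow_range_mul_norm_sub_sq_add_of_le {E : Type*} [NormedAddCommGroup E] {G : E → ℝ}
    {x : E} {b K α : ℝ} (hα : 0 < α) (hG : ∀ y, b - K * ‖y - x‖ ≤ G y) :
    BddBelow (range fun y => α * ‖x - y‖ ^ 2 + G y) := by
  refine ⟨b - K ^ 2 / (4 * α), ?_⟩
  rintro _ ⟨y, rfl⟩
  have hquad : -(K ^ 2 / (4 * α)) ≤ α * ‖x - y‖ ^ 2 - K * ‖y - x‖ := by
    rw [norm_sub_rev, neg_le, le_div_iff₀ (by positivity)]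
    nlinarith [sq_nonneg (K - 2 * α * ‖y - x‖)]
  linarith [hG y]

lemma ConvexOn.bddBelow_range_mul_norm_sub_sq_add {E : Type*} [NormedAddCommGroup E]
    [NormedSpace ℝ E] [FiniteDimensional ℝ E] {G : E → ℝ}
    (hG : ConvexOn ℝ univ G) (x : E) {α : ℝ} (hα : 0 < α) :
    BddBelow (range fun y => α * ‖x - y‖ ^ 2 + G y) := by
  have hcont : ContinuousOn G (Metric.closedBall x 1) :=
    (hG.continuousOn isOpen_univ).mono (subset_univ _)
  obtain ⟨b, hb⟩ := (isCompact_closedBall x 1).bddBelow_image hcont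
  obtain ⟨K, hK⟩ := hG.exists_sub_mul_norm_le fun z hz => hb (mem_image_of_mem G hz)
  exact bddBelow_range_mul_norm_sub_sq_add_of_le hα hK

lemma moreau_objective_weakly_convex_shift {E : Type*} [NormedAddCommGroup E]
    [InnerProductSpace ℝ E] (g : E → ℝ) {ρ γ : ℝ} (hγ : γ ≠ 0) (hγρ : 1 - γ * ρ ≠ 0) (x y : E) :
    1 / (2 * (γ / (1 - γ * ρ))) * ‖(1 - γ * ρ)⁻¹ • x - y‖ ^ 2 + (g y + ρ / 2 * ‖y‖ ^ 2) =
      1 / (2 * γ) * ‖x - y‖ ^ 2 + g y + ρ / (2 * (1 - γ * ρ)) * ‖x‖ ^ 2 := by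
  rw [norm_sub_sq_real, norm_sub_sq_real, norm_smul, real_inner_smul_left, Real.norm_eq_abs,
    mul_pow, sq_abs]
  field_simp
  ring

theorem moreau_envelope_weakly_convex_shift_general {d : ℕ}
    (g : EuclideanSpace ℝ (Fin d) → ℝ) (ρ γ : ℝ) (hγ : 0 < γ) (hγρ : γ * ρ < 1)
    (hconv : ConvexOn ℝ Set.univ (fun z => g z + ρ / 2 * ‖z‖ ^ 2)) :
    (∀ x : EuclideanSpace ℝ (Fin d),
      (⨅ y, (1 / (2 * γ)) * ‖x - y‖ ^ 2 + g y) =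
        (⨅ y, (1 / (2 * (γ / (1 - γ * ρ)))) * ‖(1 - γ * ρ)⁻¹ • x - y‖ ^ 2 +
          (g y + ρ / 2 * ‖y‖ ^ 2)) - ρ / (2 * (1 - γ * ρ)) * ‖x‖ ^ 2) ∧
    (∀ x p : EuclideanSpace ℝ (Fin d),
      IsMinOn (fun y => (1 / (2 * γ)) * ‖x - y‖ ^ 2 + g y) Set.univ p ↔
      IsMinOn (fun y => (1 / (2 * (γ / (1 - γ * ρ)))) * ‖(1 - γ * ρ)⁻¹ • x - y‖ ^ 2 +
        (g y + ρ / 2 * ‖y‖ ^ 2)) Set.univ p) := by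
  have hs : 0 < 1 - γ * ρ := by linarith
  have hshift := moreau_objective_weakly_convex_shift g hγ.ne' hs.ne'
  refine ⟨fun x => ?_, fun x p => ?_⟩
  · have hbdd := hconv.bddBelow_range_mul_norm_sub_sq_add ((1 - γ * ρ)⁻¹ • x)
      (α := 1 / (2 * (γ / (1 - γ * ρ)))) (by positivity)
    rw [ciInf_sub hbdd]
    simp only [hshift, add_sub_cancel_right]
  · simp only [isMinOn_univ_iff, hshift, add_le_add_iff_right]

theorem moreau_envelope_weakly_convex_shift {d : ℕ}
    (g : EuclideanSpace ℝ (Fin d) → ℝ) (ρ γ : ℝ) (hγ : 0 < γ) (hγρ : γ * ρ < 1)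
    (hlsc : LowerSemicontinuous g)
    (hconv : ConvexOn ℝ Set.univ (fun z => g z + ρ / 2 * ‖z‖ ^ 2)) :
    (∀ x : EuclideanSpace ℝ (Fin d),
      (⨅ y, (1 / (2 * γ)) * ‖x - y‖ ^ 2 + g y) =
        (⨅ y, (1 / (2 * (γ / (1 - γ * ρ)))) * ‖(1 - γ * ρ)⁻¹ • x - y‖ ^ 2 +
          (g y + ρ / 2 * ‖y‖ ^ 2)) - ρ / (2 * (1 - γ * ρ)) * ‖x‖ ^ 2) ∧
    (∀ x p : EuclideanSpace ℝ (Fin d),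
      IsMinOn (fun y => (1 / (2 * γ)) * ‖x - y‖ ^ 2 + g y) Set.univ p ↔
      IsMinOn (fun y => (1 / (2 * (γ / (1 - γ * ρ)))) * ‖(1 - γ * ρ)⁻¹ • x - y‖ ^ 2 +
        (g y + ρ / 2 * ‖y‖ ^ 2)) Set.univ p) :=
  moreau_envelope_weakly_convex_shift_general g ρ γ hγ hγρ hconv
end

section
/- Let g be proper, lsc, ρ-weakly convex with γρ < 1. Then the Moreau envelope g^γ is ρ/(1 - γρ)-weakly convex. -/
/-! Writing `α = 1 - γρ`, completing the square gives
`‖x - y‖² / (2γ) + ρ‖x‖² / (2α) = ‖x - α y‖² / (2γα) + ρ‖y‖² / 2`, so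
`g^γ(x) + ρ‖x‖² / (2α)` is the infimum over `y` of `‖x - α y‖² / (2γα) + (g + ρ‖·‖²/2)(y)`,
a jointly convex function of `(x, y)`; partial minimization preserves convexity. The infimum
is finite because the convex lsc function `g + ρ‖·‖²/2` has a continuous affine minorant,
which the quadratic term dominates. -/

open Set

theorem ConvexOn.ciInf_snd {E F : Type*} [AddCommGroup E] [Module ℝ E] [AddCommGroup F]
    [Module ℝ F]
    {Φ : E × F → ℝ} (hΦ : ConvexOn ℝ univ Φ) (hbdd : ∀ x, BddBelow (range fun y => Φ (x, y))) :
    ConvexOn ℝ univ fun x => ⨅ y, Φ (x, y) := by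
  refine ⟨convex_univ, fun x₁ _ x₂ _ a b ha hb hab => le_of_forall_pos_le_add fun ε hε => ?_⟩
  obtain ⟨y₁, hy₁⟩ := exists_lt_of_ciInf_lt (lt_add_of_pos_right (⨅ y, Φ (x₁, y)) hε)
  obtain ⟨y₂, hy₂⟩ := exists_lt_of_ciInf_lt (lt_add_of_pos_right (⨅ y, Φ (x₂, y)) hε)
  calc ⨅ y, Φ (a • x₁ + b • x₂, y) ≤ Φ (a • (x₁, y₁) + b • (x₂, y₂)) := ciInf_le (hbdd _) _
    _ ≤ a • Φ (x₁, y₁) + b • Φ (x₂, y₂) := hΦ.2 trivial trivial ha hb hab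
    _ ≤ a • ((⨅ y, Φ (x₁, y)) + ε) + b • ((⨅ y, Φ (x₂, y)) + ε) := by gcongr
    _ = a • (⨅ y, Φ (x₁, y)) + b • (⨅ y, Φ (x₂, y)) + ε := by
      simp only [smul_eq_mul]; linear_combination ε * hab

theorem ConvexOn.exists_affine_le_of_lowerSemicontinuous {E : Type*} [TopologicalSpace E]
    [AddCommGroup E] [Module ℝ E] [IsTopologicalAddGroup E] [ContinuousSMul ℝ E]
    [LocallyConvexSpace ℝ E] {h : E → ℝ} (hconv : ConvexOn ℝ univ h)
    (hlsc : LowerSemicontinuous h) : ∃ (φ : E →L[ℝ] ℝ) (b : ℝ), ∀ z, φ z + b ≤ h z := by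
  -- Separate `(0, h 0 - 1)` from the epigraph; the functional is negative on the vertical axis.
  have hepi : Convex ℝ {p : E × ℝ | h p.1 ≤ p.2} := by simpa using hconv.convex_epigraph
  obtain ⟨f, u, hfu, hfx⟩ := geometric_hahn_banach_closed_point hepi hlsc.isClosed_epigraph
    (x := (0, h 0 - 1)) (by simp)
  set β := f (0, 1)
  have hsplit (z : E) (t : ℝ) : f (z, t) = f (z, 0) + t * β := by
    rw [← smul_eq_mul, ← map_smul, ← map_add]; simp
  have hβ : β < 0 := by
    have := hfu (0, h 0) (show h 0 ≤ h 0 from le_rfl)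
    rw [hsplit] at this hfx
    linarith
  refine ⟨-β⁻¹ • f.comp (.inl ℝ E ℝ), u / β, fun z => ?_⟩
  have hz := hfu (z, h z) (show h z ≤ h z from le_rfl)
  rw [hsplit] at hz
  have : u / β - f (z, 0) / β ≤ h z := by
    rw [← sub_div, div_le_iff_of_neg hβ]; linarith
  simpa [div_eq_inv_mul, neg_mul, ← sub_eq_neg_add] using this

theorem bddBelow_range_mul_norm_sub_smul_sq_add {E : Type*} [NormedAddCommGroup E]
    [NormedSpace ℝ E] {h : E → ℝ} {φ : E →L[ℝ] ℝ} {b c α : ℝ} (hφ : ∀ z, φ z + b ≤ h z)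
    (hc : 0 < c) (hα : 0 < α) (x : E) :
    BddBelow (range fun y => c * ‖x - α • y‖ ^ 2 + h y) := by
  refine ⟨φ x / α + b - (‖φ‖ / α) ^ 2 / (4 * c), ?_⟩
  rintro _ ⟨y, rfl⟩
  set t := ‖x - α • y‖
  have hφy : φ x / α - ‖φ‖ / α * t ≤ φ y :=
    calc φ x / α - ‖φ‖ / α * t = (φ x - ‖φ‖ * t) / α := by ring
      _ ≤ (φ x - φ (x - α • y)) / α := by
        gcongr
        exact (le_abs_self _).trans (φ.le_opNorm _)
      _ = φ y := by
        rw [map_sub, map_smul, smul_eq_mul, sub_sub_cancel, mul_div_cancel_left₀ _ hα.ne']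
  have hsq : c * t ^ 2 - ‖φ‖ / α * t + (‖φ‖ / α) ^ 2 / (4 * c) =
      (2 * c * t - ‖φ‖ / α) ^ 2 / (4 * c) := by
    field_simp; ring
  have : 0 ≤ (2 * c * t - ‖φ‖ / α) ^ 2 / (4 * c) := by positivity
  linarith [hφ y]

theorem norm_sub_sq_add_norm_sq_eq {E : Type*} [NormedAddCommGroup E] [InnerProductSpace ℝ E]
    {γ ρ : ℝ} (hγ : γ ≠ 0) (hα : 1 - γ * ρ ≠ 0) (x y : E) :
    1 / (2 * γ) * ‖x - y‖ ^ 2 + ρ / (1 - γ * ρ) / 2 * ‖x‖ ^ 2 =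
      1 / (2 * γ * (1 - γ * ρ)) * ‖x - (1 - γ * ρ) • y‖ ^ 2 + ρ / 2 * ‖y‖ ^ 2 := by
  rw [norm_sub_sq_real, norm_sub_sq_real, real_inner_smul_right, norm_smul, mul_pow,
    Real.norm_eq_abs, sq_abs]
  field_simp
  ring

/-- As a real `⨅`, this is junk (`0`) unless the range is bounded below. -/
noncomputable def moreauEnvelope {E : Type*} [NormedAddCommGroup E] (γ : ℝ) (g : E → ℝ) (x : E) :
    ℝ :=
  ⨅ y, 1 / (2 * γ) * ‖x - y‖ ^ 2 + g y

theorem moreauEnvelope_add_eq_iInf {E : Type*} [NormedAddCommGroup E] [InnerProductSpace ℝ E]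
    {g : E → ℝ} {γ ρ : ℝ} (hγ : γ ≠ 0) (hα : 1 - γ * ρ ≠ 0) {x : E}
    (hbdd : BddBelow (range fun y =>
      1 / (2 * γ * (1 - γ * ρ)) * ‖x - (1 - γ * ρ) • y‖ ^ 2 + (g y + ρ / 2 * ‖y‖ ^ 2))) :
    moreauEnvelope γ g x + ρ / (1 - γ * ρ) / 2 * ‖x‖ ^ 2 =
      ⨅ y, 1 / (2 * γ * (1 - γ * ρ)) * ‖x - (1 - γ * ρ) • y‖ ^ 2 + (g y + ρ / 2 * ‖y‖ ^ 2) := by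
  rw [← eq_sub_iff_add_eq, ciInf_sub hbdd]
  refine iInf_congr fun y => ?_
  linear_combination norm_sub_sq_add_norm_sq_eq hγ hα x y

theorem ConvexOn.mul_norm_sub_smul_sq_add {E : Type*} [NormedAddCommGroup E] [NormedSpace ℝ E]
    {h : E → ℝ} (hh : ConvexOn ℝ univ h) {c : ℝ} (hc : 0 ≤ c) (α : ℝ) :
    ConvexOn ℝ univ fun p : E × E => c * ‖p.1 - α • p.2‖ ^ 2 + h p.2 :=
  (((convexOn_univ_norm.pow (fun _ _ => norm_nonneg _) 2).smul hc).comp_linearMap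
    (LinearMap.fst ℝ E E - α • LinearMap.snd ℝ E E)).add (hh.comp_linearMap (LinearMap.snd ℝ E E))

theorem convexOn_moreauEnvelope_add {E : Type*} [NormedAddCommGroup E] [InnerProductSpace ℝ E]
    {g : E → ℝ} {ρ γ : ℝ} (hγ : 0 < γ) (hγρ : γ * ρ < 1) (hlsc : LowerSemicontinuous g)
    (hconv : ConvexOn ℝ univ fun z => g z + ρ / 2 * ‖z‖ ^ 2) :
    ConvexOn ℝ univ fun x => moreauEnvelope γ g x + ρ / (1 - γ * ρ) / 2 * ‖x‖ ^ 2 := by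
  have hα : 0 < 1 - γ * ρ := sub_pos.2 hγρ
  have hc : 0 < 1 / (2 * γ * (1 - γ * ρ)) := by positivity
  obtain ⟨φ, b, hφ⟩ := hconv.exists_affine_le_of_lowerSemicontinuous
    (hlsc.add (by fun_prop : Continuous fun z : E => ρ / 2 * ‖z‖ ^ 2).lowerSemicontinuous)
  have hbdd := bddBelow_range_mul_norm_sub_smul_sq_add hφ hc hα
  exact ((hconv.mul_norm_sub_smul_sq_add hc.le _).ciInf_snd hbdd).congr fun x _ =>
    (moreauEnvelope_add_eq_iInf hγ.ne' hα.ne' (hbdd x)).symm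

theorem moreau_envelope_weakly_convex {d : ℕ}
    (g : EuclideanSpace ℝ (Fin d) → ℝ) (ρ γ : ℝ) (hγ : 0 < γ) (hγρ : γ * ρ < 1)
    (hlsc : LowerSemicontinuous g)
    (hconv : ConvexOn ℝ Set.univ (fun z => g z + ρ / 2 * ‖z‖ ^ 2)) :
    ConvexOn ℝ Set.univ (fun x =>
      (⨅ y, (1 / (2 * γ)) * ‖x - y‖ ^ 2 + g y) + (ρ / (1 - γ * ρ)) / 2 * ‖x‖ ^ 2) :=
  convexOn_moreauEnvelope_add hγ hγρ hlsc hconv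
end
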